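/- Let A : ℝ → M_n(ℂ) be continuous. Define for s ≤ t the path-ordered exponential P(s,t) = Σ_{k≥0} ∫_{s ≤ t₁ ≤ ⋯ ≤ t_k ≤ t} A(t₁)⋯A(t_k) dt₁⋯dt_k. Then for all r ≤ s ≤ t one has the composition law P(r,t) = P(r,s) · P(s,t). -/

import Mathlib

open MeasureTheory

attribute [local instance] Matrix.linftyOpNormedAddCommGroup Matrix.linftyOpNormedRing
  Matrix.linftyOpNormedAlgebra

/-- The ordered simplex `Δ^k_{[r,s]} = {r ≤ t₁ ≤ ⋯ ≤ t_k ≤ s}` in `ℝ^k`. -/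
def orderedSimplex (r s : ℝ) (k : ℕ) : Set (Fin k → ℝ) :=
  {t | Monotone t ∧ ∀ i, t i ∈ Set.Icc r s}

/-- The iterated integral `∫_{r ≤ t₁ ≤ ⋯ ≤ t_k ≤ s} A(t₁)⋯A(t_k) dt` (path-ordered). -/
noncomputable def simplexIntegralM (n : ℕ) (A : ℝ → Matrix (Fin n) (Fin n) ℂ)
    (r s : ℝ) (k : ℕ) : Matrix (Fin n) (Fin n) ℂ :=
  ∫ t in orderedSimplex r s k, (List.ofFn fun i => A (t i)).prod

/-- The path-ordered exponential (Dyson series)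
`P(s,t) = Σ_{k≥0} ∫_{s ≤ t₁ ≤ ⋯ ≤ t_k ≤ t} A(t₁)⋯A(t_k) dt`. -/
noncomputable def pathOrderedExp (n : ℕ) (A : ℝ → Matrix (Fin n) (Fin n) ℂ)
    (s t : ℝ) : Matrix (Fin n) (Fin n) ℂ :=
  ∑' k : ℕ, simplexIntegralM n A s t k

/-! The Dyson series is a sum of integrals over ordered simplices. Slicing the simplex
`Δ^{k+1}_{[r,T]}` by its last coordinate `u` gives the recursion
`I_{k+1}(r,T) = ∫_r^T I_k(r,u) A(u) du`, and splitting this integral at `s`, then using induction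
on `k` for `u ∈ [s,t]`, yields Chen's identity `I_k(r,t) = ∑_{i+j=k} I_i(r,s) I_j(s,t)`.
The simplex has volume `(T-r)^k/k!`, so the series converges absolutely and its Cauchy product
is the series of the right-hand sides of Chen's identity. -/

open Set Finset.HasAntidiagonal

theorem Fin.monotone_snoc_iff {α : Type*} [Preorder α] {k : ℕ} {y : Fin k → α} {u : α} :
    Monotone (Fin.snoc y u : Fin (k + 1) → α) ↔ Monotone y ∧ ∀ i, y i ≤ u := by
  refine ⟨fun h => ⟨fun i j hij => ?_, fun i => ?_⟩, fun ⟨hy, hu⟩ i j hij => ?_⟩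
  · simpa using h (Fin.castSucc_le_castSucc_iff.2 hij)
  · simpa using h (Fin.le_last i.castSucc)
  · induction j using Fin.lastCases with
    | last => induction i using Fin.lastCases <;> simp [hu]
    | cast j =>
      induction i using Fin.lastCases with
      | last => exact absurd hij (Fin.castSucc_lt_last j).not_ge
      | cast i => simpa using hy (Fin.castSucc_le_castSucc_iff.1 hij)

theorem snoc_mem_orderedSimplex_iff {r T u : ℝ} {k : ℕ} {y : Fin k → ℝ} :
    Fin.snoc y u ∈ orderedSimplex r T (k + 1) ↔ u ∈ Icc r T ∧ y ∈ orderedSimplex r u k := by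
  simp only [orderedSimplex, mem_ofPred_eq, Fin.monotone_snoc_iff, Fin.forall_fin_succ',
    Fin.snoc_castSucc, Fin.snoc_last, mem_Icc]
  grind

theorem orderedSimplex_zero (r T : ℝ) : orderedSimplex r T 0 = univ :=
  eq_univ_of_forall fun _ => ⟨fun a _ _ => a.elim0, fun i => i.elim0⟩

theorem isCompact_orderedSimplex (r T : ℝ) (k : ℕ) : IsCompact (orderedSimplex r T k) := by
  have hmono : IsClosed {t : Fin k → ℝ | Monotone t} := by
    simp only [Monotone, ofPred_forall]
    exact isClosed_iInter fun i => isClosed_iInter fun j => isClosed_iInter fun _ =>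
      isClosed_le (continuous_apply i) (continuous_apply j)
  have hbox : IsClosed {t : Fin k → ℝ | ∀ i, t i ∈ Icc r T} := by
    simp only [ofPred_forall]
    exact isClosed_iInter fun i => isClosed_Icc.preimage (continuous_apply i)
  exact (isCompact_univ_pi fun _ => isCompact_Icc).of_isClosed_subset (hmono.inter hbox)
    fun t ht i _ => ht.2 i

theorem setIntegral_orderedSimplex_succ {E : Type*} [NormedAddCommGroup E] [NormedSpace ℝ E]
    {k : ℕ} {F : (Fin (k + 1) → ℝ) → E} {r T : ℝ}
    (hF : IntegrableOn F (orderedSimplex r T (k + 1))) :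
    ∫ t in orderedSimplex r T (k + 1), F t
      = ∫ u in Icc r T, ∫ y in orderedSimplex r u k, F (Fin.snoc y u) := by
  set e := MeasurableEquiv.piFinSuccAbove (fun _ : Fin (k + 1) => ℝ) (Fin.last k)
  have he : (volume.prod volume).map e.symm = volume :=
    (volume_preserving_piFinSuccAbove (fun _ : Fin (k + 1) => ℝ) (Fin.last k)).symm.map_eq
  have he_symm (p : ℝ × (Fin k → ℝ)) : e.symm p = Fin.snoc p.2 p.1 := by
    ext i
    simp [e, MeasurableEquiv.piFinSuccAbove_symm_apply]
  have hslice (u : ℝ) (y : Fin k → ℝ) :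
      (orderedSimplex r T (k + 1)).indicator F (Fin.snoc y u)
        = (Icc r T).indicator
            (fun u => (orderedSimplex r u k).indicator (fun y => F (Fin.snoc y u)) y) u := by
    by_cases hu : u ∈ Icc r T <;> by_cases hy : y ∈ orderedSimplex r u k <;>
      simp [snoc_mem_orderedSimplex_iff, hu, hy]
  have hmeas : MeasurableSet (orderedSimplex r T (k + 1)) :=
    (isCompact_orderedSimplex r T (k + 1)).isClosed.measurableSet
  calc ∫ t in orderedSimplex r T (k + 1), F t
      = ∫ p : ℝ × (Fin k → ℝ), (orderedSimplex r T (k + 1)).indicator F (e.symm p)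
          ∂volume.prod volume := by
        rw [← integral_indicator hmeas, ← he, integral_map_equiv]
    _ = ∫ u, ∫ y, (orderedSimplex r T (k + 1)).indicator F (Fin.snoc y u) := by
        rw [integral_prod]
        · simp_rw [he_symm]
        · rwa [← integrable_indicator_iff hmeas, ← he, integrable_map_equiv] at hF
    _ = ∫ u in Icc r T, ∫ y in orderedSimplex r u k, F (Fin.snoc y u) := by
        simp_rw [hslice]
        rw [← integral_indicator measurableSet_Icc]
        congr 1 with u
        by_cases hu : u ∈ Icc r T
        · simp only [indicator_of_mem hu]
          exact integral_indicator (isCompact_orderedSimplex r u k).isClosed.measurableSet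
        · simp [indicator_of_notMem hu]

theorem prod_ofFn_snoc {M : Type*} [Monoid M] (f : ℝ → M) {k : ℕ} (y : Fin k → ℝ) (u : ℝ) :
    (List.ofFn fun i => f ((Fin.snoc y u : Fin (k + 1) → ℝ) i)).prod
      = (List.ofFn fun i => f (y i)).prod * f u := by
  simp [List.ofFn_succ', -List.ofFn_succ]

theorem continuous_prod_ofFn_comp {M : Type*} [TopologicalSpace M] [Monoid M] [ContinuousMul M]
    {f : ℝ → M} (hf : Continuous f) (k : ℕ) :
    Continuous fun t : Fin k → ℝ => (List.ofFn fun i => f (t i)).prod := by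
  simp_rw [List.ofFn_eq_map]
  exact continuous_list_prod _ fun i _ => hf.comp (continuous_apply i)

theorem integrableOn_prod_ofFn_orderedSimplex {R : Type*} [NormedRing R] {f : ℝ → R}
    (hf : Continuous f) (r T : ℝ) (k : ℕ) :
    IntegrableOn (fun t : Fin k → ℝ => (List.ofFn fun i => f (t i)).prod)
      (orderedSimplex r T k) :=
  (continuous_prod_ofFn_comp hf k).continuousOn.integrableOn_compact
    (isCompact_orderedSimplex r T k)

theorem integral_Icc_sub_pow_div_factorial {r T : ℝ} (hrT : r ≤ T) (k : ℕ) :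
    ∫ u in Icc r T, (u - r) ^ k / k.factorial = (T - r) ^ (k + 1) / (k + 1).factorial := by
  rw [integral_Icc_eq_integral_Ioc, ← intervalIntegral.integral_of_le hrT,
    intervalIntegral.integral_div, intervalIntegral.integral_comp_sub_right (· ^ k), integral_pow,
    sub_self, zero_pow k.succ_ne_zero, sub_zero, Nat.factorial_succ]
  push_cast
  field_simp

section SimplexIntegral

variable {B : Type*} [NormedRing B] [NormedAlgebra ℝ B] {f : ℝ → B}

noncomputable def simplexIntegral (f : ℝ → B) (r T : ℝ) (k : ℕ) : B :=
  ∫ t in orderedSimplex r T k, (List.ofFn fun i => f (t i)).prod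

theorem simplexIntegral_zero [CompleteSpace B] (f : ℝ → B) (r T : ℝ) :
    simplexIntegral f r T 0 = 1 := by
  simp [simplexIntegral, orderedSimplex_zero, measureReal_def, volume_pi]

theorem simplexIntegral_succ (hf : Continuous f) (r T : ℝ) (k : ℕ) :
    simplexIntegral f r T (k + 1) = ∫ u in Icc r T, simplexIntegral f r u k * f u := by
  rw [simplexIntegral,
    setIntegral_orderedSimplex_succ (integrableOn_prod_ofFn_orderedSimplex hf r T _)]
  simp_rw [prod_ofFn_snoc]
  congr 1 with u
  exact integral_mul_const_of_integrable (integrableOn_prod_ofFn_orderedSimplex hf r u k)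

theorem simplexIntegral_one (r T : ℝ) (k : ℕ) :
    simplexIntegral (fun _ => (1 : ℝ)) r T k = volume.real (orderedSimplex r T k) := by
  simp [simplexIntegral]

theorem volume_real_orderedSimplex {r T : ℝ} (hrT : r ≤ T) (k : ℕ) :
    volume.real (orderedSimplex r T k) = (T - r) ^ k / k.factorial := by
  induction k generalizing T with
  | zero => simp [orderedSimplex_zero, measureReal_def, volume_pi]
  | succ k ih =>
    rw [← simplexIntegral_one, simplexIntegral_succ continuous_const,
      ← integral_Icc_sub_pow_div_factorial hrT]
    refine setIntegral_congr_fun measurableSet_Icc fun u hu => ?_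
    rw [simplexIntegral_one, mul_one, ih hu.1]

theorem norm_simplexIntegral_le [NormOneClass B] {r T M : ℝ} (hrT : r ≤ T)
    (hM : ∀ u ∈ Icc r T, ‖f u‖ ≤ M) (k : ℕ) :
    ‖simplexIntegral f r T k‖ ≤ (M * (T - r)) ^ k / k.factorial := by
  have hprod (t) (ht : t ∈ orderedSimplex r T k) :
      ‖(List.ofFn fun i => f (t i)).prod‖ ≤ M ^ k :=
    calc ‖(List.ofFn fun i => f (t i)).prod‖
        ≤ ((List.ofFn fun i => f (t i)).map norm).prod := List.norm_prod_le _
      _ = ∏ i, ‖f (t i)‖ := by rw [List.map_ofFn, List.prod_ofFn]; rfl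
      _ ≤ ∏ _i : Fin k, M :=
          Finset.prod_le_prod (fun i _ => norm_nonneg _) fun i _ => hM _ (ht.2 i)
      _ = M ^ k := by simp
  calc ‖simplexIntegral f r T k‖
      ≤ M ^ k * volume.real (orderedSimplex r T k) :=
        norm_setIntegral_le_of_norm_le_const (isCompact_orderedSimplex r T k).measure_lt_top hprod
    _ = (M * (T - r)) ^ k / k.factorial := by
        rw [volume_real_orderedSimplex hrT, mul_pow, mul_div_assoc]

theorem summable_norm_simplexIntegral [NormOneClass B] (hf : Continuous f) {r T : ℝ}
    (hrT : r ≤ T) : Summable fun k => ‖simplexIntegral f r T k‖ := by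
  obtain ⟨M, hM⟩ := isCompact_Icc.exists_bound_of_continuousOn hf.continuousOn
  exact .of_nonneg_of_le (fun _ => norm_nonneg _) (norm_simplexIntegral_le hrT hM)
    (Real.summable_pow_div_factorial _)

theorem continuousOn_simplexIntegral [CompleteSpace B] (hf : Continuous f) (r T : ℝ) (k : ℕ) :
    ContinuousOn (fun u => simplexIntegral f r u k) (Icc r T) := by
  induction k with
  | zero => simpa only [simplexIntegral_zero] using continuousOn_const
  | succ k ih =>
    simp only [simplexIntegral_succ hf]
    exact intervalIntegral.continuousOn_primitive_Icc
      ((ih.mul hf.continuousOn).integrableOn_compact isCompact_Icc)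

theorem simplexIntegral_eq_sum_antidiagonal [CompleteSpace B] (hf : Continuous f) {r s : ℝ}
    (hrs : r ≤ s) (k : ℕ) {t : ℝ} (hst : s ≤ t) :
    simplexIntegral f r t k
      = ∑ p ∈ antidiagonal k, simplexIntegral f r s p.1 * simplexIntegral f s t p.2 := by
  have hint (a b : ℝ) (j : ℕ) :
      IntegrableOn (fun u => simplexIntegral f a u j * f u) (Icc a b) :=
    ((continuousOn_simplexIntegral hf a b j).mul hf.continuousOn).integrableOn_compact
      isCompact_Icc
  induction k generalizing t with
  | zero => simp [simplexIntegral_zero]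
  | succ k ih =>
    calc simplexIntegral f r t (k + 1)
        = (∫ u in Icc r s, simplexIntegral f r u k * f u)
          + ∫ u in Icc s t, simplexIntegral f r u k * f u := by
          rw [simplexIntegral_succ hf, ← Icc_union_Ioc_eq_Icc hrs hst,
            setIntegral_union ((Iic_disjoint_Ioc le_rfl).mono_left Icc_subset_Iic_self)
              measurableSet_Ioc (hint r s k)
              ((hint r t k).mono_set (Ioc_subset_Icc_self.trans (Icc_subset_Icc_left hrs))),
            integral_Icc_eq_integral_Ioc (x := s)]
      _ = simplexIntegral f r s (k + 1) + ∫ u in Icc s t, ∑ p ∈ antidiagonal k,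
            simplexIntegral f r s p.1 * (simplexIntegral f s u p.2 * f u) := by
          rw [simplexIntegral_succ hf]
          congr 1
          refine setIntegral_congr_fun measurableSet_Icc fun u hu => ?_
          simp only [ih hu.1, Finset.sum_mul, mul_assoc]
      _ = simplexIntegral f r s (k + 1) + ∑ p ∈ antidiagonal k,
            simplexIntegral f r s p.1 * simplexIntegral f s t (p.2 + 1) := by
          rw [integral_finsetSum _ fun p _ => (hint s t p.2).const_mul _]
          simp only [integral_const_mul_of_integrable (hint s t _), simplexIntegral_succ hf]
      _ = _ := by rw [Finset.Nat.sum_antidiagonal_succ', simplexIntegral_zero, mul_one]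

end SimplexIntegral

/-- Composition law of parallel transport: `P(r,t) = P(r,s) · P(s,t)` for `r ≤ s ≤ t`. -/
theorem pathOrderedExp_comp (n : ℕ) (A : ℝ → Matrix (Fin n) (Fin n) ℂ)
    (hA : Continuous A) (r s t : ℝ) (hrs : r ≤ s) (hst : s ≤ t) :
    pathOrderedExp n A r t = pathOrderedExp n A r s * pathOrderedExp n A s t := by
  cases n with
  | zero => exact Subsingleton.elim _ _
  | succ n =>
    -- the `ℓ∞` operator norm satisfies `‖1‖ = 1` only for a nonempty index type
    have : NormOneClass (Matrix (Fin (n + 1)) (Fin (n + 1)) ℂ) := Matrix.linfty_opNormOneClass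
    exact (tsum_congr fun k => simplexIntegral_eq_sum_antidiagonal hA hrs k hst).trans
      (tsum_mul_tsum_eq_tsum_sum_antidiagonal_of_summable_norm
        (summable_norm_simplexIntegral hA hrs) (summable_norm_simplexIntegral hA hst)).symm
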